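/- For every complex s with s ∉ {-1, -1/2, -1/4, ...} and every k ≥ 0: 1/((s+1)(2s+1)⋯(2^k s+1)) = ∑_{0≤ℓ≤k} (-1)^{k-ℓ} 2^{-C(k-ℓ+1,2)-ℓ} / ((s+2^{-ℓ}) Q_ℓ Q_{k-ℓ}), where Q_m := ∏_{1≤i≤m}(1-2^{-i}) and C(m,2)=m(m-1)/2. -/

import Mathlib

/-!
The right-hand side is the partial fraction decomposition over the nodes `-2^{-j}`: since
`2^j s + 1 = 2^j (s + 2^{-j})`, the barycentric form of Lagrange interpolation of the
constant `1` expresses the inverse product through the nodal weights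
`∏_{j ≠ ℓ} (2^{-j} - 2^{-ℓ})⁻¹`. Scaled by `2^j`, the factors with `j < ℓ` are
`1 - 2^{-(ℓ-j)}` and multiply to `Q_ℓ`, while those with `j = ℓ + i > ℓ` are
`1 - 2^i = -2^i (1 - 2^{-i})` and multiply to `(-1)^m 2^{C(m+1,2)} Q_m` with `m = k - ℓ`.
-/

/-- Q_m = ∏_{1≤i≤m} (1 - 2^{-i}). -/
noncomputable def Qfin (m : ℕ) : ℂ := ∏ i ∈ Finset.range m, (1 - (1 : ℂ) / 2 ^ (i + 1))

open Finset Polynomial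

theorem Lagrange.inv_prod_sub_eq_sum_nodalWeight {F ι : Type*} [Field F] [DecidableEq ι]
    {s : Finset ι} {v : ι → F} {x : F} (hvs : Set.InjOn v s) (hs : s.Nonempty)
    (hx : ∀ i ∈ s, x ≠ v i) :
    (∏ i ∈ s, (x - v i))⁻¹ = ∑ i ∈ s, nodalWeight s v i * (x - v i)⁻¹ := by
  refine inv_eq_of_mul_eq_one_right ?_
  simpa only [interpolate_one hvs hs, eval_one, Pi.one_apply, mul_one, eval_nodal] using
    (eval_interpolate_not_at_node 1 hx).symm

theorem Finset.prod_range_erase_eq_mul {M : Type*} [CommMonoid M] (f : ℕ → M) (ℓ m : ℕ) :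
    ∏ j ∈ (range (ℓ + m + 1)).erase ℓ, f j =
      (∏ j ∈ range ℓ, f j) * ∏ i ∈ range m, f (ℓ + 1 + i) := by
  have hsplit : (range (ℓ + m + 1)).erase ℓ =
      range ℓ ∪ (range m).map (addLeftEmbedding (ℓ + 1)) := by
    ext j
    simp only [mem_erase, mem_range, mem_union, mem_map, addLeftEmbedding_apply]
    constructor
    · rintro ⟨hne, hlt⟩
      rcases Nat.lt_or_gt_of_ne hne with h | h
      · exact Or.inl h
      · exact Or.inr ⟨j - (ℓ + 1), by omega, by omega⟩
    · rintro (h | ⟨i, hi, rfl⟩) <;> omega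
  rw [hsplit, prod_union, prod_map]
  · rfl
  · rw [disjoint_left]
    simp only [mem_range, mem_map, addLeftEmbedding_apply]
    rintro j hj ⟨i, -, rfl⟩
    omega

theorem Finset.sum_range_id_add_one (m : ℕ) : ∑ i ∈ range m, (i + 1) = (m + 1) * m / 2 := by
  have h := sum_range_id (m + 1)
  rwa [sum_range_succ', Nat.add_sub_cancel, add_zero] at h

theorem prod_range_one_sub_two_pow_div_eq_Qfin (ℓ : ℕ) :
    ∏ j ∈ range ℓ, (1 - (2 : ℂ) ^ j / 2 ^ ℓ) = Qfin ℓ := by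
  rw [← prod_range_reflect]
  refine prod_congr rfl fun i hi => ?_
  have hℓ : (2 : ℂ) ^ ℓ = 2 ^ (ℓ - 1 - i) * 2 ^ (i + 1) := by
    rw [← pow_add]
    congr 1
    have := mem_range.mp hi
    omega
  rw [hℓ, div_mul_cancel_left₀ (pow_ne_zero _ two_ne_zero), one_div]

theorem prod_range_one_sub_two_pow_succ (m : ℕ) :
    ∏ i ∈ range m, (1 - (2 : ℂ) ^ (i + 1)) = (-1) ^ m * 2 ^ ((m + 1) * m / 2) * Qfin m := by
  have hfactor :
      ∀ i : ℕ, 1 - (2 : ℂ) ^ (i + 1) = -1 * 2 ^ (i + 1) * (1 - 1 / 2 ^ (i + 1)) := by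
    intro i
    field_simp
    ring
  simp_rw [hfactor, prod_mul_distrib, prod_const, card_range, prod_pow_eq_pow_sum,
    sum_range_id_add_one, Qfin]

theorem prod_two_pow_mul_prod_erase_sub (ℓ m : ℕ) :
    (∏ j ∈ range (ℓ + m + 1), (2 : ℂ) ^ j) *
        ∏ j ∈ (range (ℓ + m + 1)).erase ℓ, (-(1 / 2 ^ ℓ) - -(1 / 2 ^ j) : ℂ) =
      (-1) ^ m * 2 ^ ((m + 1) * m / 2 + ℓ) * Qfin ℓ * Qfin m := by
  have hterm :
      ∀ j : ℕ, (2 : ℂ) ^ j * (-(1 / 2 ^ ℓ) - -(1 / 2 ^ j)) = 1 - 2 ^ j / 2 ^ ℓ := by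
    intro j
    field_simp
    ring
  have hshift : ∀ i : ℕ, 1 - (2 : ℂ) ^ (ℓ + 1 + i) / 2 ^ ℓ = 1 - 2 ^ (i + 1) := by
    intro i
    rw [show ℓ + 1 + i = ℓ + (i + 1) by ring, pow_add,
      mul_div_cancel_left₀ _ (pow_ne_zero _ two_ne_zero)]
  rw [← mul_prod_erase _ _ (mem_range.mpr (by omega : ℓ < ℓ + m + 1)), mul_assoc,
    ← prod_mul_distrib]
  simp_rw [hterm, prod_range_erase_eq_mul, hshift, prod_range_one_sub_two_pow_div_eq_Qfin,
    prod_range_one_sub_two_pow_succ, pow_add]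
  ring

theorem partial_fraction_expansion (s : ℂ) (hs : ∀ j : ℕ, s ≠ -(1 / 2 ^ j)) (k : ℕ) :
    (∏ j ∈ Finset.range (k + 1), ((2 : ℂ) ^ j * s + 1))⁻¹ =
      ∑ ℓ ∈ Finset.range (k + 1),
        (-1 : ℂ) ^ (k - ℓ) * ((2 : ℂ) ^ ((k - ℓ + 1) * (k - ℓ) / 2 + ℓ))⁻¹ /
          ((s + 1 / 2 ^ ℓ) * Qfin ℓ * Qfin (k - ℓ)) := by
  set v : ℕ → ℂ := fun j => -(1 / 2 ^ j) with hv
  have hinj : Set.InjOn v (range (k + 1)) := by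
    intro i _ j _ h
    have h2 : (2 : ℂ) ^ i = 2 ^ j := by simpa [hv] using h
    exact Nat.pow_right_injective le_rfl (by exact_mod_cast h2)
  have hfactor : ∀ j : ℕ, (2 : ℂ) ^ j * s + 1 = 2 ^ j * (s - v j) := by
    intro j
    rw [hv, sub_neg_eq_add, mul_add, mul_one_div_cancel (pow_ne_zero _ two_ne_zero)]
  simp_rw [hfactor, prod_mul_distrib, mul_inv,
    Lagrange.inv_prod_sub_eq_sum_nodalWeight hinj nonempty_range_add_one (fun j _ => hs j),
    mul_sum]
  refine sum_congr rfl fun ℓ hℓ => ?_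
  obtain ⟨m, rfl⟩ : ∃ m, k = ℓ + m := Nat.exists_eq_add_of_le (mem_range_succ_iff.mp hℓ)
  rw [Nat.add_sub_cancel_left, Lagrange.nodalWeight, prod_inv_distrib, ← mul_assoc, ← mul_inv,
    prod_two_pow_mul_prod_erase_sub]
  simp only [hv, sub_neg_eq_add, mul_inv, div_eq_mul_inv, ← inv_pow, inv_neg_one]
  ring
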